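/- arXiv:2509.06666 — 6 statements merged into one kernel-verified Lean document; each statement's English description precedes it below -/
import Mathlib

section
/- For all odd integers a, b, c, the cokernel of the group homomorphism ℤ⁴ → ℤ⁴ given by multiplication by the matrix M(a,b,c) with rows (2a, b, c, -2), (b, 2, 0, 0), (c, 0, -2, 0), (-2, 0, 0, 0) is isomorphic, as an abelian group, to ℤ/4ℤ × ℤ/4ℤ. Equivalently, the Smith normal form of M(a,b,c) is diag(1, 1, 4, 4). -/
/-- The Gram matrix of the algebraic part of the twisted Mukai lattice,
with respect to the basis `(2e₀+2B, h, s, e₄)`. -/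
def GramM (a b c : ℤ) : Matrix (Fin 4) (Fin 4) ℤ :=
  !![2*a,  b,  c, -2;
       b,  2,  0,  0;
       c,  0, -2,  0;
      -2,  0,  0,  0]

/-- For odd integers `a, b, c`, the cokernel `ℤ⁴ / M(a,b,c) ℤ⁴` is isomorphic to
`ZMod 4 × ZMod 4`. -/
theorem coker_GramM (a b c : ℤ) (ha : Odd a) (hb : Odd b) (hc : Odd c) :
    Nonempty
      (((Fin 4 → ℤ) ⧸ LinearMap.range (GramM a b c).mulVecLin) ≃+ (ZMod 4 × ZMod 4)) := by
  obtain ⟨k, hk⟩ := hb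
  obtain ⟨l, hl⟩ := hc
  subst hk hl
  let f : (Fin 4 → ℤ) →ₗ[ℤ] ZMod 4 × ZMod 4 :=
    { toFun := fun x => (((2*x 0 + x 1 + x 2 + (k+l+1) * x 3 : ℤ) : ZMod 4),
                         ((2*x 1 + x 3 : ℤ) : ZMod 4))
      map_add' := by
        intro x y
        simp only [Pi.add_apply, Prod.mk_add_mk, Prod.mk.injEq]
        push_cast
        constructor <;> ring
      map_smul' := by
        intro r x
        simp only [Pi.smul_apply, smul_eq_mul, RingHom.id_apply, Prod.smul_mk, zsmul_eq_mul,
          Prod.mk.injEq]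
        push_cast
        constructor <;> ring }
  have hker : LinearMap.ker f = LinearMap.range (GramM (a) (2*k+1) (2*l+1)).mulVecLin := by
    ext x
    simp only [LinearMap.mem_ker, LinearMap.mem_range, LinearMap.coe_mk, AddHom.coe_mk,
      Prod.mk_eq_zero, f]
    constructor
    · rintro ⟨h1, h2⟩
      rw [ZMod.intCast_zmod_eq_zero_iff_dvd] at h1 h2
      obtain ⟨n, hn⟩ := h1
      obtain ⟨m, hm⟩ := h2
      push_cast at hn hm
      refine ⟨![x 1 - 2*m, -(k*x 1) + (2*k+1)*m, x 0 - k*x 1 + (2*k+1)*m - 2*n,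
        l*x 0 + (a - k*(k+l+1))*x 1 + ((2*k+1)*(k+l+1) - 2*a)*m - (2*l+1)*n], ?_⟩
      have hx3 : x 3 = 4*m - 2*x 1 := by linarith
      have hx2 : x 2 = 4*n - 2*x 0 - x 1 - (k+l+1)*(4*m - 2*x 1) := by
        linear_combination hn - (k+l+1)*hm
      funext i
      fin_cases i
      · simp [GramM, Matrix.mulVecLin, Matrix.mulVec, dotProduct, Fin.sum_univ_four]
        ring
      · simp [GramM, Matrix.mulVecLin, Matrix.mulVec, dotProduct, Fin.sum_univ_four]
        ring
      · simp [GramM, Matrix.mulVecLin, Matrix.mulVec, dotProduct, Fin.sum_univ_four]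
        linear_combination (-1 : ℤ) * hx2
      · simp [GramM, Matrix.mulVecLin, Matrix.mulVec, dotProduct, Fin.sum_univ_four]
        linear_combination (-1 : ℤ) * hx3
    · rintro ⟨v, rfl⟩
      constructor <;> rw [ZMod.intCast_zmod_eq_zero_iff_dvd]
      · refine ⟨a*v 0 + (k+1)*v 1 + l*v 2 - v 3, ?_⟩
        simp [GramM, Matrix.mulVecLin, Matrix.mulVec, dotProduct, Fin.sum_univ_four]
        push_cast
        ring
      · refine ⟨k*v 0 + v 1, ?_⟩
        simp [GramM, Matrix.mulVecLin, Matrix.mulVec, dotProduct, Fin.sum_univ_four]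
        push_cast
        ring
  have hsurj : Function.Surjective f := by
    rintro ⟨p, q⟩
    obtain ⟨P, hP⟩ := ZMod.intCast_surjective (n := 4) p
    obtain ⟨Q, hQ⟩ := ZMod.intCast_surjective (n := 4) q
    refine ⟨![0, 0, P - (k+l+1)*Q, Q], ?_⟩
    simp only [LinearMap.coe_mk, AddHom.coe_mk, f, Prod.mk.injEq]
    constructor
    · rw [← hP]
      norm_num [Matrix.cons_val_succ, Matrix.cons_val_two, Matrix.cons_val_three, Matrix.vecHead, Matrix.vecTail]
    · rw [← hQ]
      norm_num [Matrix.cons_val_succ, Matrix.cons_val_two, Matrix.cons_val_three, Matrix.vecHead, Matrix.vecTail]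
  exact ⟨((Submodule.quotEquivOfEq _ _ hker.symm).trans
    (f.quotKerEquivOfSurjective hsurj)).toAddEquiv⟩
end

section
/- Let a, b, c be odd integers and let M = M(a,b,c) be the matrix with rows (2a, b, c, -2), (b, 2, 0, 0), (c, 0, -2, 0), (-2, 0, 0, 0), with rational inverse N = M⁻¹. Then there exist u, v ∈ ℤ⁴ such that: the classes of u and v generate the quotient group ℤ⁴/Mℤ⁴ (which has order 16), both classes have order 4, and the rational numbers uᵀNu, vᵀNv, uᵀNv satisfy uᵀNu - 1/2 ∈ 2ℤ, vᵀNv - 1/2 ∈ 2ℤ, and uᵀNv - 3/4 ∈ ℤ. -/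
open Matrix

/-- The rational inverse `N = M(a,b,c)⁻¹`. -/
noncomputable def NMat (a b c : ℤ) : Matrix (Fin 4) (Fin 4) ℚ :=
  ((GramM a b c).map (Int.cast : ℤ → ℚ))⁻¹

/-- The rational number `uᵀ N v` for integer vectors `u, v`. -/
noncomputable def pairN (a b c : ℤ) (u v : Fin 4 → ℤ) : ℚ :=
  (fun i => (u i : ℚ)) ⬝ᵥ (NMat a b c).mulVec (fun i => (v i : ℚ))

/-- The discriminant group `ℤ⁴ / M(a,b,c) ℤ⁴`. -/
abbrev Coker (a b c : ℤ) :=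
  (Fin 4 → ℤ) ⧸ LinearMap.range (GramM a b c).mulVecLin


/-!
The cokernel of `M` has order `|det M| = 16`. Write `a, b, c = 2A+1, 2B+1, 2C+1` and take `u = e₁`,
`v = (x, B+1, C+1, 1)` with `x` chosen so that `vᵀNv = 1/2`. The vectors `4Nu` and `4Nv` are
integral, so `t ↦ (4uᵀNt, 4vᵀNt) mod 4` is a well-defined homomorphism
`ℤ⁴/Mℤ⁴ → (ℤ/4)²`. It sends `u, v` to the rows of `4·[[1/2, 3/4], [3/4, 1/2]] ≡ [[2, 3], [3, 2]]`,
which generate `(ℤ/4)²` because `det = -5` is a unit mod 4; since both groups have order 16 it is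
an isomorphism, and it transports generation and orders. The values of the form are the same
integral dot products divided by 4.
-/

section Cokernel

variable {ι : Type*} [Fintype ι]

theorem Matrix.natCard_quotient_range_mulVecLin [DecidableEq ι] (A : Matrix ι ι ℤ)
    (hA : A.det ≠ 0) :
    Nat.card ((ι → ℤ) ⧸ LinearMap.range A.mulVecLin) = A.det.natAbs := by
  have hinj : Function.Injective A.mulVecLin := by
    rw [← LinearMap.ker_eq_bot, LinearMap.ker_eq_bot']
    intro v hv
    by_contra hv_ne
    exact hA (exists_mulVec_eq_zero_iff.1 ⟨v, hv_ne, hv⟩)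
  rw [← Submodule.natAbs_det_equiv _ (LinearEquiv.ofInjective _ hinj), ← LinearMap.det_toLin']
  rfl

/-- If `r ᵥ* A ∈ nℤ^ι`, then `r ⬝ᵥ (A *ᵥ w) ∈ nℤ`, so `t ↦ r ⬝ᵥ t mod n` factors through the
cokernel of `A`. -/
def Matrix.cokerDotMod (A : Matrix ι ι ℤ) (n : ℕ) (r : ι → ℤ) (hr : ∃ w, r ᵥ* A = (n : ℤ) • w) :
    ((ι → ℤ) ⧸ LinearMap.range A.mulVecLin) →ₗ[ℤ] ZMod n :=
  Submodule.liftQ _ ((Int.castAddHom (ZMod n)).toIntLinearMap ∘ₗ dotProductBilin ℤ ℤ r) <| by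
    rintro _ ⟨t, rfl⟩
    obtain ⟨w, hw⟩ := hr
    show ((r ⬝ᵥ A *ᵥ t : ℤ) : ZMod n) = 0
    rw [dotProduct_mulVec, hw, smul_dotProduct, smul_eq_mul, Int.cast_mul, Int.cast_natCast,
      ZMod.natCast_self, zero_mul]

@[simp]
theorem Matrix.cokerDotMod_mk (A : Matrix ι ι ℤ) (n : ℕ) (r : ι → ℤ)
    (hr : ∃ w, r ᵥ* A = (n : ℤ) • w) (t : ι → ℤ) :
    A.cokerDotMod n r hr (Submodule.Quotient.mk t) = ((r ⬝ᵥ t : ℤ) : ZMod n) :=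
  rfl

end Cokernel

theorem AddSubgroup.closure_eq_top_of_injective {G H : Type*} [AddGroup G] [AddGroup H]
    {f : G →+ H} (hf : Function.Injective f) {s : Set G} (h : closure (f '' s) = ⊤) :
    closure s = ⊤ := by
  apply AddSubgroup.map_injective hf
  rw [AddMonoidHom.map_closure, h, ← AddMonoidHom.range_eq_map]
  refine (eq_top_iff.2 ?_).symm
  rw [← h]
  exact (closure_le _).2 (Set.image_subset_range _ _)

theorem closure_pair_two_three_eq_top :
    AddSubgroup.closure {((2 : ZMod 4), (3 : ZMod 4)), (3, 2)} = ⊤ := by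
  rw [eq_top_iff]
  rintro p -
  rw [AddSubgroup.mem_closure_pair]
  -- `[[2, 3], [3, 2]]` is its own inverse mod 4
  refine ⟨((2 * p.1 + 3 * p.2).val : ℤ), ((3 * p.1 + 2 * p.2).val : ℤ), ?_⟩
  simp only [natCast_zsmul]
  revert p
  decide

theorem addOrderOf_two_three : addOrderOf ((2 : ZMod 4), (3 : ZMod 4)) = 4 := by
  rw [addOrderOf_eq_iff (by norm_num)]
  decide

theorem addOrderOf_three_two : addOrderOf ((3 : ZMod 4), (2 : ZMod 4)) = 4 := by
  rw [addOrderOf_eq_iff (by norm_num)]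
  decide

theorem intCast_four_mul_add_three (k : ℤ) : ((4*k+3 : ℤ) : ZMod 4) = 3 := by
  push_cast
  rw [show (4 : ZMod 4) = 0 from rfl, zero_mul, zero_add]

theorem isSymm_GramM (a b c : ℤ) : (GramM a b c).IsSymm := by
  ext i j
  fin_cases i <;> fin_cases j <;> rfl

theorem vecMul_GramM (a b c : ℤ) (r : Fin 4 → ℤ) : r ᵥ* GramM a b c = GramM a b c *ᵥ r := by
  conv_lhs => rw [← (isSymm_GramM a b c).eq]
  exact vecMul_transpose _ _

theorem det_GramM (a b c : ℤ) : (GramM a b c).det = 16 := by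
  simp [GramM, det_succ_row_zero, Fin.sum_univ_succ, Fin.succAbove]

theorem natCard_coker (a b c : ℤ) : Nat.card (Coker a b c) = 16 := by
  rw [natCard_quotient_range_mulVecLin _ (by simp [det_GramM]), det_GramM]
  rfl

theorem pairN_eq_dotProduct_div {a b c n : ℤ} (hn : n ≠ 0) {r v : Fin 4 → ℤ}
    (hr : GramM a b c *ᵥ r = n • v) (u : Fin 4 → ℤ) :
    pairN a b c u v = (u ⬝ᵥ r : ℤ) / n := by
  have hdet : ((GramM a b c).map (Int.cast : ℤ → ℚ)).det = ((GramM a b c).det : ℚ) :=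
    (RingHom.map_det (Int.castRingHom ℚ) _).symm
  have hv : (fun i => (v i : ℚ)) =
      (GramM a b c).map (Int.cast : ℤ → ℚ) *ᵥ ((n : ℚ)⁻¹ • fun i => (r i : ℚ)) := by
    ext i
    have hri := RingHom.map_mulVec (Int.castRingHom ℚ) (GramM a b c) r i
    rw [hr, Pi.smul_apply, smul_eq_mul, map_mul] at hri
    rw [mulVec_smul, Pi.smul_apply, smul_eq_mul, eq_inv_mul_iff_mul_eq₀ (by exact_mod_cast hn)]
    exact hri
  rw [pairN, NMat, hv, mulVec_mulVec, nonsing_inv_mul _ (by simp [hdet, det_GramM]),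
    one_mulVec, dotProduct_smul, smul_eq_mul]
  push_cast [dotProduct]
  field_simp

section OddGram

variable (A B C : ℤ)

def genU : Fin 4 → ℤ := ![0, 1, 0, 0]

def genV : Fin 4 → ℤ := ![(2*B+1)*(B+1) - (2*C+1)*(C+1) - A - 1, B+1, C+1, 1]

/-- `dualU = 4Nu` and `dualV = 4Nv` are integral since `a, b, c` are odd. -/
def dualU : Fin 4 → ℤ := ![0, 2, 0, 2*B+1]

def dualV : Fin 4 → ℤ := ![-2, 4*B+3, -(4*C+3), C-B-2*A]

theorem GramM_mulVec_dualU : GramM (2*A+1) (2*B+1) (2*C+1) *ᵥ dualU B = (4 : ℤ) • genU := by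
  ext i
  fin_cases i <;> simp [GramM, dualU, genU, mulVec, dotProduct, Fin.sum_univ_four]
  ring

theorem GramM_mulVec_dualV :
    GramM (2*A+1) (2*B+1) (2*C+1) *ᵥ dualV A B C = (4 : ℤ) • genV A B C := by
  ext i
  fin_cases i <;> simp [GramM, dualV, genV, mulVec, dotProduct, Fin.sum_univ_four] <;> ring

theorem genU_dotProduct_dualU : genU ⬝ᵥ dualU B = 2 := by
  simp [genU, dualU, dotProduct, Fin.sum_univ_four]

theorem genU_dotProduct_dualV : genU ⬝ᵥ dualV A B C = 4*B+3 := by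
  simp [genU, dualV, dotProduct, Fin.sum_univ_four]

theorem genV_dotProduct_dualU : genV A B C ⬝ᵥ dualU B = 4*B+3 := by
  simp [genV, dualU, dotProduct, Fin.sum_univ_four]
  ring

theorem genV_dotProduct_dualV : genV A B C ⬝ᵥ dualV A B C = 2 := by
  simp [genV, dualV, dotProduct, Fin.sum_univ_four]
  ring

def discrMap : Coker (2*A+1) (2*B+1) (2*C+1) →ₗ[ℤ] ZMod 4 × ZMod 4 :=
  (cokerDotMod _ 4 (dualU B)
      ⟨genU, by rw [vecMul_GramM, GramM_mulVec_dualU, Nat.cast_ofNat]⟩).prod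
    (cokerDotMod _ 4 (dualV A B C)
      ⟨genV A B C, by rw [vecMul_GramM, GramM_mulVec_dualV, Nat.cast_ofNat]⟩)

theorem discrMap_mk_genU : discrMap A B C (Submodule.Quotient.mk genU) = (2, 3) := by
  simp only [discrMap, LinearMap.prod_apply, Function.prod_apply, cokerDotMod_mk,
    dotProduct_comm _ genU, genU_dotProduct_dualU, genU_dotProduct_dualV,
    intCast_four_mul_add_three, Int.cast_ofNat]

theorem discrMap_mk_genV : discrMap A B C (Submodule.Quotient.mk (genV A B C)) = (3, 2) := by
  simp only [discrMap, LinearMap.prod_apply, Function.prod_apply, cokerDotMod_mk,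
    dotProduct_comm _ (genV A B C), genV_dotProduct_dualU, genV_dotProduct_dualV,
    intCast_four_mul_add_three, Int.cast_ofNat]

theorem discrMap_bijective : Function.Bijective (discrMap A B C) := by
  have hsurj : Function.Surjective (discrMap A B C).toAddMonoidHom := by
    rw [← AddMonoidHom.range_eq_top, eq_top_iff, ← closure_pair_two_three_eq_top,
      AddSubgroup.closure_le, Set.insert_subset_iff, Set.singleton_subset_iff]
    exact ⟨⟨_, discrMap_mk_genU A B C⟩, ⟨_, discrMap_mk_genV A B C⟩⟩
  have : Finite (Coker (2*A+1) (2*B+1) (2*C+1)) :=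
    Nat.finite_of_card_ne_zero (by rw [natCard_coker]; norm_num)
  exact hsurj.bijective_of_nat_card_le (by simp [natCard_coker])

end OddGram

theorem discriminant_form_GramM (a b c : ℤ) (ha : Odd a) (hb : Odd b) (hc : Odd c) :
    ∃ u v : Fin 4 → ℤ,
      AddSubgroup.closure
          {(Submodule.Quotient.mk u : Coker a b c), (Submodule.Quotient.mk v : Coker a b c)}
        = ⊤ ∧
      Nat.card (Coker a b c) = 16 ∧
      addOrderOf (Submodule.Quotient.mk u : Coker a b c) = 4 ∧
      addOrderOf (Submodule.Quotient.mk v : Coker a b c) = 4 ∧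
      (∃ k : ℤ, pairN a b c u u - 1/2 = 2 * k) ∧
      (∃ k : ℤ, pairN a b c v v - 1/2 = 2 * k) ∧
      (∃ k : ℤ, pairN a b c u v - 3/4 = k) := by
  obtain ⟨A, rfl⟩ := ha
  obtain ⟨B, rfl⟩ := hb
  obtain ⟨C, rfl⟩ := hc
  have hinj := (discrMap_bijective A B C).injective
  have horder := addOrderOf_injective (discrMap A B C).toAddMonoidHom hinj
  refine ⟨genU, genV A B C, ?_, natCard_coker _ _ _, ?_, ?_, ⟨0, ?_⟩, ⟨0, ?_⟩, ⟨B, ?_⟩⟩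
  · refine AddSubgroup.closure_eq_top_of_injective (f := (discrMap A B C).toAddMonoidHom) hinj ?_
    rw [Set.image_pair, LinearMap.toAddMonoidHom_coe, discrMap_mk_genU, discrMap_mk_genV]
    exact closure_pair_two_three_eq_top
  · rw [← horder, LinearMap.toAddMonoidHom_coe, discrMap_mk_genU]
    exact addOrderOf_two_three
  · rw [← horder, LinearMap.toAddMonoidHom_coe, discrMap_mk_genV]
    exact addOrderOf_three_two
  · rw [pairN_eq_dotProduct_div four_ne_zero (GramM_mulVec_dualU A B C), genU_dotProduct_dualU]
    norm_num
  · rw [pairN_eq_dotProduct_div four_ne_zero (GramM_mulVec_dualV A B C), genV_dotProduct_dualV]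
    norm_num
  · rw [pairN_eq_dotProduct_div four_ne_zero (GramM_mulVec_dualV A B C), genU_dotProduct_dualV]
    push_cast
    ring
end

section
/- Let G = ℤ/4ℤ × ℤ/4ℤ and let q : G → ℚ/2ℤ be the well-defined quadratic form given on integer representatives by q(x, y) = (x² + 3xy + y²)/2 modulo 2ℤ. Then the subgroup 2G = {(0,0), (2,0), (0,2), (2,2)} is isotropic for q (q vanishes on it), it is isomorphic to ℤ/2ℤ × ℤ/2ℤ, and it is the UNIQUE subgroup H ≤ G of order 4 with q|_H = 0. -/
/-- `ℚ / 2ℤ`, the value group of a finite quadratic form. -/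
abbrev QMod2 := ℚ ⧸ AddSubgroup.zmultiples (2 : ℚ)

private def fq (x y : ℚ) : ℚ := (x^2 + 3*x*y + y^2) / 2

private lemma exists_of_mk_zero {r : ℚ} (h : (QuotientAddGroup.mk r : QMod2) = 0) :
    ∃ k : ℤ, r = 2*k := by
  rw [QuotientAddGroup.eq_zero_iff, AddSubgroup.mem_zmultiples_iff] at h
  obtain ⟨k, hk⟩ := h
  exact ⟨k, by rw [← hk, zsmul_eq_mul]; ring⟩

private lemma mk_eq_zero {r : ℚ} (k : ℤ) (h : r = 2*k) :
    (QuotientAddGroup.mk r : QMod2) = 0 := by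
  rw [QuotientAddGroup.eq_zero_iff, AddSubgroup.mem_zmultiples_iff]
  exact ⟨k, by rw [zsmul_eq_mul]; linarith⟩

private lemma mem_of_qzero (x y : ℤ) (hx0 : 0 ≤ x) (hx : x < 4) (hy0 : 0 ≤ y) (hy : y < 4)
    (h : (QuotientAddGroup.mk (fq x y) : QMod2) = 0) :
    ((x : ZMod 4), (y : ZMod 4)) ∈ ({(0,0),(2,0),(0,2),(2,2)} : Set (ZMod 4 × ZMod 4)) := by
  obtain ⟨k, hk⟩ := exists_of_mk_zero h
  have hZ : x^2 + 3*x*y + y^2 = 4*k := by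
    have h2 : (x:ℚ)^2 + 3*x*y + y^2 = 4*k := by
      have := hk; rw [fq] at this; field_simp at this; linarith
    exact_mod_cast h2
  simp only [Set.mem_insert_iff, Set.mem_singleton_iff, Prod.mk.injEq]
  interval_cases x <;> interval_cases y <;> first | decide | omega

private lemma mk_congr (x y x' y' : ℤ) (hx : (x : ZMod 4) = (x' : ZMod 4))
    (hy : (y : ZMod 4) = (y' : ZMod 4)) :
    (QuotientAddGroup.mk (fq x y) : QMod2) = QuotientAddGroup.mk (fq x' y') := by
  rw [ZMod.intCast_eq_intCast_iff'] at hx hy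
  obtain ⟨a, ha⟩ : (4:ℤ) ∣ x' - x := Int.ModEq.dvd hx
  obtain ⟨b, hb⟩ : (4:ℤ) ∣ y' - y := Int.ModEq.dvd hy
  have hx' : x' = x + 4*a := by linarith
  have hy' : y' = y + 4*b := by linarith
  rw [QuotientAddGroup.eq, AddSubgroup.mem_zmultiples_iff]
  refine ⟨2*a*x + 4*a^2 + 3*a*y + 3*b*x + 12*a*b + 2*b*y + 4*b^2, ?_⟩
  subst hx' hy'
  push_cast [fq, zsmul_eq_mul]
  ring

private def qform (g : ZMod 4 × ZMod 4) : QMod2 :=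
  QuotientAddGroup.mk (fq ((g.1.val : ℤ) : ℚ) ((g.2.val : ℤ) : ℚ))

private lemma cast_val_int (a : ZMod 4) : (((a.val : ℤ)) : ZMod 4) = a := by
  simp [ZMod.natCast_val, ZMod.intCast_cast, ZMod.intCast_zmod_cast]

private lemma qform_eq (x y : ℤ) :
    qform ((x : ZMod 4), (y : ZMod 4)) =
      QuotientAddGroup.mk (((x : ℚ)^2 + 3*(x : ℚ)*(y : ℚ) + (y : ℚ)^2) / 2) := by
  show (QuotientAddGroup.mk (fq _ _) : QMod2) = _
  exact mk_congr _ _ x y (cast_val_int _) (cast_val_int _)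

private def psi : ZMod 2 →+ ZMod 4 where
  toFun x := 2 * x.val
  map_zero' := by decide
  map_add' := by decide

private def phi : ZMod 2 × ZMod 2 →+ ZMod 4 × ZMod 4 := psi.prodMap psi

private lemma phi_inj : Function.Injective phi := by decide

private lemma range_eq :
    (phi.range : Set (ZMod 4 × ZMod 4)) = {(0, 0), (2, 0), (0, 2), (2, 2)} := by
  ext p
  simp only [SetLike.mem_coe, AddMonoidHom.mem_range, Set.mem_insert_iff,
    Set.mem_singleton_iff]
  revert p
  decide

theorem isotropic_subgroup_unique :
    ∃ q : ZMod 4 × ZMod 4 → QMod2,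
      (∀ x y : ℤ,
          q ((x : ZMod 4), (y : ZMod 4)) =
            QuotientAddGroup.mk (((x : ℚ)^2 + 3*(x : ℚ)*(y : ℚ) + (y : ℚ)^2) / 2)) ∧
      ∀ q' : ZMod 4 × ZMod 4 → QMod2,
        (∀ x y : ℤ,
            q' ((x : ZMod 4), (y : ZMod 4)) =
              QuotientAddGroup.mk (((x : ℚ)^2 + 3*(x : ℚ)*(y : ℚ) + (y : ℚ)^2) / 2)) →
        ∃ H : AddSubgroup (ZMod 4 × ZMod 4),
          (H : Set (ZMod 4 × ZMod 4)) = {(0, 0), (2, 0), (0, 2), (2, 2)} ∧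
          (∀ g ∈ H, q' g = 0) ∧
          Nonempty (H ≃+ (ZMod 2 × ZMod 2)) ∧
          ∀ H' : AddSubgroup (ZMod 4 × ZMod 4),
            Nat.card H' = 4 → (∀ g ∈ H', q' g = 0) → H' = H := by
  refine ⟨qform, qform_eq, ?_⟩
  intro q' hq'
  -- q' agrees with qform everywhere
  have hq'form : ∀ g : ZMod 4 × ZMod 4,
      q' g = QuotientAddGroup.mk (fq ((g.1.val : ℤ) : ℚ) ((g.2.val : ℤ) : ℚ)) := by
    intro g
    have h1 := hq' (g.1.val : ℤ) (g.2.val : ℤ)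
    rw [cast_val_int, cast_val_int] at h1
    simpa [fq] using h1
  refine ⟨phi.range, range_eq, ?_, ⟨(AddMonoidHom.ofInjective phi_inj).symm⟩, ?_⟩
  · -- q' vanishes on phi.range
    intro g hg
    have hg' : g ∈ ({(0,0),(2,0),(0,2),(2,2)} : Set (ZMod 4 × ZMod 4)) := by
      rw [← range_eq]; exact hg
    rcases hg' with h | h | h | h <;> subst h
    · have h2 := hq' 0 0; push_cast at h2; rw [h2]; exact mk_eq_zero 0 (by norm_num)
    · have h2 := hq' 2 0; push_cast at h2; rw [h2]; exact mk_eq_zero 1 (by norm_num)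
    · have h2 := hq' 0 2; push_cast at h2; rw [h2]; exact mk_eq_zero 1 (by norm_num)
    · have h2 := hq' 2 2; push_cast at h2; rw [h2]; exact mk_eq_zero 5 (by norm_num)
  · -- uniqueness
    intro H' hcard hzero
    have hle : (H' : Set (ZMod 4 × ZMod 4)) ⊆ (phi.range : Set (ZMod 4 × ZMod 4)) := by
      intro g hg
      rw [range_eq]
      have h0 := hzero g hg
      rw [hq'form g] at h0
      have := mem_of_qzero (g.1.val : ℤ) (g.2.val : ℤ)
        (Int.ofNat_nonneg _) (by exact_mod_cast ZMod.val_lt g.1)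
        (Int.ofNat_nonneg _) (by exact_mod_cast ZMod.val_lt g.2) h0
      rwa [cast_val_int, cast_val_int, Prod.mk.eta] at this
    have hcardH : Nat.card phi.range = 4 := by
      rw [Nat.card_congr (AddMonoidHom.ofInjective phi_inj).toEquiv.symm]
      simp [Nat.card_eq_fintype_card]
    apply SetLike.coe_injective
    apply Set.eq_of_subset_of_ncard_le hle
    rw [← Nat.card_coe_set_eq, ← Nat.card_coe_set_eq]
    simp only [SetLike.coe_sort_coe, hcard, hcardH, le_refl]
end

section
/- Let (V, β) be a finite-dimensional ℚ-vector space with a nondegenerate symmetric bilinear form, and let L ⊆ V be a finitely generated subgroup of rank equal to dim V such that β(x, y) ∈ ℤ and β(x, x) ∈ 2ℤ for all x, y ∈ L (an even lattice). Let L^∨ = {v ∈ V : β(v, x) ∈ ℤ for all x ∈ L} be the dual lattice, and assume the quotient L^∨/L has order 16 and is generated by the classes of two elements u, v ∈ L^∨, each of order 4, satisfying β(u,u) - 1/2 ∈ 2ℤ, β(v,v) - 1/2 ∈ 2ℤ, and β(u,v) - 3/4 ∈ ℤ. Then there is exactly one subgroup L' with L ⊆ L' ⊆ L^∨ of index 4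 over L such that β is ℤ-valued on L' × L' and β(x,x) ∈ 2ℤ for all x ∈ L' (i.e., a unique even overlattice of index 4); moreover L'/L ≅ ℤ/2ℤ × ℤ/2ℤ. -/
/-!
The classes of `u` and `v` identify `L^∨/L` with `(ℤ/4ℤ)²`, and for `x ≡ a u + b v (mod L)` one has
`2 β(x, x) ≡ a² + b² + 3ab (mod 4)`. This vanishes exactly when `a` and `b` are even, so the even
vectors of `L^∨` form the lattice `L + 2ℤu + 2ℤv`, whose quotient by `L` is `(ℤ/2ℤ)²`; an even
lattice is integral by polarization. Every even overlattice lies in `L + 2ℤu + 2ℤv`, so one of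
index four is equal to it.
-/

/-- The dual lattice `L^∨ = {v ∈ V : β(v, x) ∈ ℤ for all x ∈ L}` of a subgroup `L` of a
rational vector space with a bilinear form `β`. -/
def dualLattice {V : Type*} [AddCommGroup V] [Module ℚ V]
    (β : LinearMap.BilinForm ℚ V) (L : Submodule ℤ V) : Submodule ℤ V where
  carrier := {v | ∀ x ∈ L, ∃ n : ℤ, β v x = (n : ℚ)}
  zero_mem' := fun x _ => ⟨0, by simp⟩
  add_mem' := by
    intro a b ha hb x hx
    obtain ⟨m, hm⟩ := ha x hx
    obtain ⟨n, hn⟩ := hb x hx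
    exact ⟨m + n, by simp only [map_add, LinearMap.add_apply, hm, hn]; push_cast; ring⟩
  smul_mem' := by
    intro n v hv x hx
    obtain ⟨m, hm⟩ := hv x hx
    refine ⟨n * m, ?_⟩
    rw [map_zsmul, LinearMap.smul_apply, hm, zsmul_eq_mul]
    push_cast
    ring

/-- The quotient `L'/L` of two lattices `L ≤ L'` in `V`. -/
abbrev latticeQuot {V : Type*} [AddCommGroup V] [Module ℚ V]
    (L L' : Submodule ℤ V) :=
  L' ⧸ (L.comap L'.subtype)

lemma four_dvd_mul_self_add_mul_self_add_three_mul_iff (a b : ℤ) :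
    4 ∣ a * a + b * b + 3 * (a * b) ↔ 2 ∣ a ∧ 2 ∣ b := by
  have key : ∀ A B : ZMod 4, A * A + B * B + 3 * (A * B) = 0 ↔
      ((A.cast : ZMod 2) = 0 ∧ (B.cast : ZMod 2) = 0) := by
    decide
  have h := key a b
  have h4 := ZMod.intCast_zmod_eq_zero_iff_dvd (a * a + b * b + 3 * (a * b)) 4
  push_cast [ZMod.cast_intCast (show 2 ∣ 4 by norm_num)] at h h4
  simp only [ZMod.intCast_zmod_eq_zero_iff_dvd, Nat.cast_ofNat] at h
  rw [← h4, h]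

section ZModPair

variable {G : Type*} [AddCommGroup G] {n : ℕ} {x y : G}

def zmodPairHom (hx : (n : ℤ) • x = 0) (hy : (n : ℤ) • y = 0) : ZMod n × ZMod n →+ G :=
  (ZMod.lift n ⟨zmultiplesHom G x, hx⟩).coprod (ZMod.lift n ⟨zmultiplesHom G y, hy⟩)

variable (hx : (n : ℤ) • x = 0) (hy : (n : ℤ) • y = 0)

lemma zmodPairHom_intCast (a b : ℤ) : zmodPairHom hx hy (a, b) = a • x + b • y := by
  simp [zmodPairHom, ZMod.lift_coe]

lemma zmodPairHom_surjective (hgen : AddSubgroup.closure {x, y} = ⊤) :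
    Function.Surjective (zmodPairHom hx hy) := by
  intro g
  obtain ⟨a, b, rfl⟩ := AddSubgroup.mem_closure_pair.mp (hgen ▸ AddSubgroup.mem_top g)
  exact ⟨(a, b), zmodPairHom_intCast hx hy a b⟩

lemma zsmul_add_zsmul_eq_zero_iff (hinj : Function.Injective (zmodPairHom hx hy)) (a b : ℤ) :
    a • x + b • y = 0 ↔ (n : ℤ) ∣ a ∧ (n : ℤ) ∣ b := by
  rw [← zmodPairHom_intCast hx hy, ← map_zero (zmodPairHom hx hy), hinj.eq_iff, Prod.zero_eq_mk,
    Prod.mk.injEq, ZMod.intCast_zmod_eq_zero_iff_dvd, ZMod.intCast_zmod_eq_zero_iff_dvd]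

lemma zmodPairHom_injective (hker : ∀ a b : ℤ, a • x + b • y = 0 → (n : ℤ) ∣ a ∧ (n : ℤ) ∣ b) :
    Function.Injective (zmodPairHom hx hy) := by
  rw [injective_iff_map_eq_zero]
  rintro ⟨A, B⟩ h
  obtain ⟨a, rfl⟩ := ZMod.intCast_surjective A
  obtain ⟨b, rfl⟩ := ZMod.intCast_surjective B
  obtain ⟨ha, hb⟩ := hker a b (by rwa [zmodPairHom_intCast] at h)
  rw [(ZMod.intCast_zmod_eq_zero_iff_dvd a n).mpr ha, (ZMod.intCast_zmod_eq_zero_iff_dvd b n).mpr hb]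
  rfl

lemma zmodPairHom_bijective_of_card [NeZero n] (hgen : AddSubgroup.closure {x, y} = ⊤)
    (hcard : Nat.card G = n * n) : Function.Bijective (zmodPairHom hx hy) :=
  (Nat.bijective_iff_surjective_and_card _).mpr
    ⟨zmodPairHom_surjective hx hy hgen, by rw [Nat.card_prod, Nat.card_zmod, hcard]⟩

end ZModPair

section Lattice

variable {V : Type*} [AddCommGroup V]

lemma mem_sup_span_pair_iff {L : Submodule ℤ V} {p q x : V} :
    x ∈ L ⊔ Submodule.span ℤ {p, q} ↔ ∃ a b : ℤ, x - (a • p + b • q) ∈ L := by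
  simp only [Submodule.mem_sup, Submodule.mem_span_pair]
  constructor
  · rintro ⟨l, hl, _, ⟨a, b, rfl⟩, rfl⟩
    exact ⟨a, b, by simpa using hl⟩
  · rintro ⟨a, b, h⟩
    exact ⟨_, h, _, ⟨a, b, rfl⟩, sub_add_cancel _ _⟩

variable {L M : Submodule ℤ V} {u v : V}

lemma quotient_zsmul_add_zsmul_eq_zero_iff (hu : u ∈ M) (hv : v ∈ M) (a b : ℤ) :
    a • (Submodule.Quotient.mk ⟨u, hu⟩ : M ⧸ L.comap M.subtype) +
      b • Submodule.Quotient.mk ⟨v, hv⟩ = 0 ↔ a • u + b • v ∈ L :=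
  Submodule.Quotient.mk_eq_zero _

lemma quotient_closure_pair_eq_top_iff (hu : u ∈ M) (hv : v ∈ M) :
    AddSubgroup.closure {(Submodule.Quotient.mk ⟨u, hu⟩ : M ⧸ L.comap M.subtype),
      Submodule.Quotient.mk ⟨v, hv⟩} = ⊤ ↔ ∀ x ∈ M, ∃ a b : ℤ, x - (a • u + b • v) ∈ L := by
  simp only [AddSubgroup.eq_top_iff', AddSubgroup.mem_closure_pair]
  constructor
  · intro h x hx
    obtain ⟨a, b, hab⟩ := h (Submodule.Quotient.mk ⟨x, hx⟩)
    exact ⟨a, b, by simpa using (Submodule.Quotient.eq _).mp hab.symm⟩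
  · intro h y
    obtain ⟨⟨x, hx⟩, rfl⟩ := Submodule.Quotient.mk_surjective _ y
    obtain ⟨a, b, hab⟩ := h x hx
    exact ⟨a, b, ((Submodule.Quotient.eq _).mpr (by simpa using hab)).symm⟩

variable [Module ℚ V]

lemma eq_of_le_of_card_latticeQuot_eq {N : Submodule ℤ V} (hLM : L ≤ M) (hMN : M ≤ N)
    (hcard : Nat.card (latticeQuot L M) = Nat.card (latticeQuot L N))
    (hN : Nat.card (latticeQuot L N) ≠ 0) : M = N := by
  have h := AddSubgroup.relIndex_mul_relIndex L.toAddSubgroup M.toAddSubgroup N.toAddSubgroup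
    hLM hMN
  change Nat.card (latticeQuot L M) * _ = Nat.card (latticeQuot L N) at h
  rw [hcard, Nat.mul_eq_left hN] at h
  exact le_antisymm hMN (AddSubgroup.relIndex_eq_one.mp h)

lemma nonempty_latticeQuot_addEquiv_zmod_prod {n : ℕ} (hu : u ∈ M) (hv : v ∈ M)
    (hrep : ∀ x ∈ M, ∃ a b : ℤ, x - (a • u + b • v) ∈ L)
    (hker : ∀ a b : ℤ, a • u + b • v ∈ L ↔ (n : ℤ) ∣ a ∧ (n : ℤ) ∣ b) :
    Nonempty (latticeQuot L M ≃+ ZMod n × ZMod n) := by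
  have hx := (quotient_zsmul_add_zsmul_eq_zero_iff hu hv n 0).mpr ((hker n 0).mpr (by simp))
  have hy := (quotient_zsmul_add_zsmul_eq_zero_iff hu hv 0 n).mpr ((hker 0 n).mpr (by simp))
  rw [zero_smul, add_zero] at hx
  rw [zero_smul, zero_add] at hy
  have hinj := zmodPairHom_injective hx hy fun a b h ↦
    (hker a b).mp ((quotient_zsmul_add_zsmul_eq_zero_iff hu hv a b).mp h)
  have hsurj := zmodPairHom_surjective hx hy ((quotient_closure_pair_eq_top_iff hu hv).mpr hrep)
  exact ⟨(AddEquiv.ofBijective _ ⟨hinj, hsurj⟩).symm⟩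

end Lattice

section BilinForm

variable {V : Type*} [AddCommGroup V] [Module ℚ V] {β : LinearMap.BilinForm ℚ V}

lemma apply_zsmul_add_zsmul_self (hsymm : ∀ x y : V, β x y = β y x) (a b : ℤ) (u v : V) :
    β (a • u + b • v) (a • u + b • v) = a * a * β u u + 2 * a * b * β u v + b * b * β v v := by
  simp only [← Int.cast_smul_eq_zsmul ℚ, map_add, map_smul, LinearMap.add_apply,
    LinearMap.smul_apply, smul_eq_mul, hsymm v u]
  ring

lemma exists_int_apply_of_even {M : Submodule ℤ V} (hsymm : ∀ x y : V, β x y = β y x)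
    (heven : ∀ x ∈ M, ∃ n : ℤ, β x x = 2 * (n : ℚ)) :
    ∀ x ∈ M, ∀ y ∈ M, ∃ n : ℤ, β x y = (n : ℚ) := by
  intro x hx y hy
  obtain ⟨k, hk⟩ := heven x hx
  obtain ⟨l, hl⟩ := heven y hy
  obtain ⟨m, hm⟩ := heven (x + y) (M.add_mem hx hy)
  refine ⟨m - k - l, ?_⟩
  simp only [map_add, LinearMap.add_apply, hsymm y x] at hm
  push_cast
  linarith

variable {L : Submodule ℤ V}

lemma exists_apply_self_eq_add_two_mul (hsymm : ∀ x y : V, β x y = β y x)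
    (heven : ∀ l ∈ L, ∃ n : ℤ, β l l = 2 * (n : ℚ)) {x y : V} (hx : x ∈ dualLattice β L)
    (hxy : y - x ∈ L) : ∃ n : ℤ, β y y = β x x + 2 * (n : ℚ) := by
  obtain ⟨m, hm⟩ := hx _ hxy
  obtain ⟨k, hk⟩ := heven _ hxy
  refine ⟨m + k, ?_⟩
  obtain ⟨l, rfl⟩ : ∃ l, y = x + l := ⟨y - x, by abel⟩
  simp only [add_sub_cancel_left, map_add, LinearMap.add_apply, hsymm l x] at hm hk ⊢
  push_cast
  linarith

lemma even_iff_two_dvd_of_sub_mem (hsymm : ∀ x y : V, β x y = β y x)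
    (heven : ∀ l ∈ L, ∃ n : ℤ, β l l = 2 * (n : ℚ)) {u v : V}
    (hu : u ∈ dualLattice β L) (hv : v ∈ dualLattice β L)
    (hqu : ∃ k : ℤ, β u u - 1/2 = 2 * (k : ℚ)) (hqv : ∃ k : ℤ, β v v - 1/2 = 2 * (k : ℚ))
    (hbuv : ∃ k : ℤ, β u v - 3/4 = (k : ℚ)) {x : V} {a b : ℤ} (hx : x - (a • u + b • v) ∈ L) :
    (∃ n : ℤ, β x x = 2 * (n : ℚ)) ↔ 2 ∣ a ∧ 2 ∣ b := by
  obtain ⟨k₁, hk₁⟩ := hqu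
  obtain ⟨k₂, hk₂⟩ := hqv
  obtain ⟨k₃, hk₃⟩ := hbuv
  obtain ⟨m, hm⟩ := exists_apply_self_eq_add_two_mul hsymm heven
    (add_mem (zsmul_mem hu a) (zsmul_mem hv b)) hx
  rw [apply_zsmul_add_zsmul_self hsymm] at hm
  set N := a * a + b * b + 3 * (a * b)
  set K := m + a * a * k₁ + b * b * k₂ + a * b * k₃
  have hxx : 2 * β x x = ((N + 4 * K : ℤ) : ℚ) := by
    push_cast [N, K]
    linear_combination 2 * hm + (2 * a * a : ℚ) * hk₁ + (2 * b * b : ℚ) * hk₂ +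
      (4 * a * b : ℚ) * hk₃
  rw [← four_dvd_mul_self_add_mul_self_add_three_mul_iff]
  constructor
  · rintro ⟨n, hn⟩
    refine ⟨n - K, ?_⟩
    have h : ((N : ℤ) : ℚ) = ((4 * (n - K) : ℤ) : ℚ) := by
      push_cast at hxx ⊢
      linarith
    exact_mod_cast h
  · rintro ⟨c, hc⟩
    refine ⟨c + K, ?_⟩
    rw [show N = 4 * c from hc] at hxx
    push_cast at hxx ⊢
    linarith

end BilinForm

lemma mem_sup_span_two_zsmul_iff_even {V : Type*} [AddCommGroup V] [Module ℚ V]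
    {β : LinearMap.BilinForm ℚ V} {L : Submodule ℤ V} (hsymm : ∀ x y : V, β x y = β y x)
    (heven : ∀ l ∈ L, ∃ n : ℤ, β l l = 2 * (n : ℚ)) {u v : V}
    (hu : u ∈ dualLattice β L) (hv : v ∈ dualLattice β L)
    (hqu : ∃ k : ℤ, β u u - 1/2 = 2 * (k : ℚ)) (hqv : ∃ k : ℤ, β v v - 1/2 = 2 * (k : ℚ))
    (hbuv : ∃ k : ℤ, β u v - 3/4 = (k : ℚ))
    (hrep : ∀ x ∈ dualLattice β L, ∃ a b : ℤ, x - (a • u + b • v) ∈ L)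
    {x : V} (hx : x ∈ dualLattice β L) :
    x ∈ L ⊔ Submodule.span ℤ {(2 : ℤ) • u, (2 : ℤ) • v} ↔ ∃ n : ℤ, β x x = 2 * (n : ℚ) := by
  rw [mem_sup_span_pair_iff]
  constructor
  · rintro ⟨a, b, h⟩
    rw [smul_smul, smul_smul] at h
    exact (even_iff_two_dvd_of_sub_mem hsymm heven hu hv hqu hqv hbuv h).mpr
      ⟨dvd_mul_left 2 a, dvd_mul_left 2 b⟩
  · intro h
    obtain ⟨a, b, hab⟩ := hrep x hx
    obtain ⟨⟨a, rfl⟩, ⟨b, rfl⟩⟩ :=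
      (even_iff_two_dvd_of_sub_mem hsymm heven hu hv hqu hqv hbuv hab).mp h
    exact ⟨a, b, by rwa [smul_smul, smul_smul, mul_comm a, mul_comm b]⟩

theorem unique_even_overlattice_general
    {V : Type*} [AddCommGroup V] [Module ℚ V]
    (β : LinearMap.BilinForm ℚ V)
    (hsymm : ∀ x y : V, β x y = β y x)
    (L : Submodule ℤ V)
    (heven : ∀ x ∈ L, ∃ n : ℤ, β x x = 2 * (n : ℚ))
    (hLdual : L ≤ dualLattice β L)
    (hcard : Nat.card (latticeQuot L (dualLattice β L)) = 16)
    (u v : V) (hu : u ∈ dualLattice β L) (hv : v ∈ dualLattice β L)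
    (hgen : AddSubgroup.closure
        {(Submodule.Quotient.mk ⟨u, hu⟩ : latticeQuot L (dualLattice β L)),
         (Submodule.Quotient.mk ⟨v, hv⟩ : latticeQuot L (dualLattice β L))} = ⊤)
    (hordu : addOrderOf (Submodule.Quotient.mk ⟨u, hu⟩ : latticeQuot L (dualLattice β L)) = 4)
    (hordv : addOrderOf (Submodule.Quotient.mk ⟨v, hv⟩ : latticeQuot L (dualLattice β L)) = 4)
    (hqu : ∃ k : ℤ, β u u - 1/2 = 2 * (k : ℚ))
    (hqv : ∃ k : ℤ, β v v - 1/2 = 2 * (k : ℚ))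
    (hbuv : ∃ k : ℤ, β u v - 3/4 = (k : ℚ)) :
    (∃! L' : Submodule ℤ V,
      L ≤ L' ∧ L' ≤ dualLattice β L ∧
      Nat.card (latticeQuot L L') = 4 ∧
      (∀ x ∈ L', ∀ y ∈ L', ∃ n : ℤ, β x y = (n : ℚ)) ∧
      (∀ x ∈ L', ∃ n : ℤ, β x x = 2 * (n : ℚ))) ∧
    ∀ L' : Submodule ℤ V,
      (L ≤ L' ∧ L' ≤ dualLattice β L ∧
        Nat.card (latticeQuot L L') = 4 ∧
        (∀ x ∈ L', ∀ y ∈ L', ∃ n : ℤ, β x y = (n : ℚ)) ∧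
        (∀ x ∈ L', ∃ n : ℤ, β x x = 2 * (n : ℚ))) →
      Nonempty (latticeQuot L L' ≃+ (ZMod 2 × ZMod 2)) := by
  set Ld := dualLattice β L
  have h4u := addOrderOf_dvd_iff_zsmul_eq_zero.mp (Int.natCast_dvd_natCast.mpr hordu.dvd)
  have h4v := addOrderOf_dvd_iff_zsmul_eq_zero.mp (Int.natCast_dvd_natCast.mpr hordv.dvd)
  have hD := zmodPairHom_bijective_of_card h4u h4v hgen hcard
  have hrep := (quotient_closure_pair_eq_top_iff hu hv).mp hgen
  have hker (a b : ℤ) : a • u + b • v ∈ L ↔ 4 ∣ a ∧ 4 ∣ b :=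
    (quotient_zsmul_add_zsmul_eq_zero_iff hu hv a b).symm.trans
      (zsmul_add_zsmul_eq_zero_iff h4u h4v hD.1 a b)
  set L0 := L ⊔ Submodule.span ℤ {(2 : ℤ) • u, (2 : ℤ) • v}
  have hL0Ld : L0 ≤ Ld :=
    sup_le hLdual (Submodule.span_le.mpr (Set.pair_subset (zsmul_mem hu 2) (zsmul_mem hv 2)))
  have hmem (x : V) (hx : x ∈ Ld) : x ∈ L0 ↔ ∃ n : ℤ, β x x = 2 * (n : ℚ) :=
    mem_sup_span_two_zsmul_iff_even hsymm heven hu hv hqu hqv hbuv hrep hx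
  have hL0even (x : V) (hx : x ∈ L0) := (hmem x (hL0Ld hx)).mp hx
  obtain ⟨e⟩ : Nonempty (latticeQuot L L0 ≃+ ZMod 2 × ZMod 2) :=
    nonempty_latticeQuot_addEquiv_zmod_prod
      (Submodule.mem_sup_right (Submodule.subset_span (by simp)))
      (Submodule.mem_sup_right (Submodule.subset_span (by simp)))
      (fun x hx ↦ mem_sup_span_pair_iff.mp hx)
      (fun a b ↦ by rw [smul_smul, smul_smul, hker]; omega)
  have hcard0 : Nat.card (latticeQuot L L0) = 4 := by
    rw [Nat.card_congr e.toEquiv, Nat.card_prod, Nat.card_zmod]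
  have huniq (L' : Submodule ℤ V) (hLL' : L ≤ L') (hL'Ld : L' ≤ Ld)
      (hcard' : Nat.card (latticeQuot L L') = 4)
      (heven' : ∀ x ∈ L', ∃ n : ℤ, β x x = 2 * (n : ℚ)) : L' = L0 :=
    eq_of_le_of_card_latticeQuot_eq hLL' (fun x hx ↦ (hmem x (hL'Ld hx)).mpr (heven' x hx))
      (hcard'.trans hcard0.symm) (by rw [hcard0]; norm_num)
  refine ⟨⟨L0, ⟨le_sup_left, hL0Ld, hcard0, exists_int_apply_of_even hsymm hL0even, hL0even⟩,
    fun L' ⟨h₁, h₂, h₃, _, h₅⟩ ↦ huniq L' h₁ h₂ h₃ h₅⟩, fun L' ⟨h₁, h₂, h₃, _, h₅⟩ ↦ ?_⟩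
  rw [huniq L' h₁ h₂ h₃ h₅]
  exact ⟨e⟩

theorem unique_even_overlattice
    {V : Type*} [AddCommGroup V] [Module ℚ V] [FiniteDimensional ℚ V]
    (β : LinearMap.BilinForm ℚ V)
    (hsymm : ∀ x y : V, β x y = β y x)
    (hnd : β.Nondegenerate)
    (L : Submodule ℤ V) (hfg : L.FG)
    (hfull : Submodule.span ℚ (L : Set V) = ⊤)
    (hint : ∀ x ∈ L, ∀ y ∈ L, ∃ n : ℤ, β x y = (n : ℚ))
    (heven : ∀ x ∈ L, ∃ n : ℤ, β x x = 2 * (n : ℚ))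
    (hLdual : L ≤ dualLattice β L)
    (hcard : Nat.card (latticeQuot L (dualLattice β L)) = 16)
    (u v : V) (hu : u ∈ dualLattice β L) (hv : v ∈ dualLattice β L)
    (hgen : AddSubgroup.closure
        {(Submodule.Quotient.mk ⟨u, hu⟩ : latticeQuot L (dualLattice β L)),
         (Submodule.Quotient.mk ⟨v, hv⟩ : latticeQuot L (dualLattice β L))} = ⊤)
    (hordu : addOrderOf (Submodule.Quotient.mk ⟨u, hu⟩ : latticeQuot L (dualLattice β L)) = 4)
    (hordv : addOrderOf (Submodule.Quotient.mk ⟨v, hv⟩ : latticeQuot L (dualLattice β L)) = 4)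
    (hqu : ∃ k : ℤ, β u u - 1/2 = 2 * (k : ℚ))
    (hqv : ∃ k : ℤ, β v v - 1/2 = 2 * (k : ℚ))
    (hbuv : ∃ k : ℤ, β u v - 3/4 = (k : ℚ)) :
    (∃! L' : Submodule ℤ V,
      L ≤ L' ∧ L' ≤ dualLattice β L ∧
      Nat.card (latticeQuot L L') = 4 ∧
      (∀ x ∈ L', ∀ y ∈ L', ∃ n : ℤ, β x y = (n : ℚ)) ∧
      (∀ x ∈ L', ∃ n : ℤ, β x x = 2 * (n : ℚ))) ∧
    ∀ L' : Submodule ℤ V,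
      (L ≤ L' ∧ L' ≤ dualLattice β L ∧
        Nat.card (latticeQuot L L') = 4 ∧
        (∀ x ∈ L', ∀ y ∈ L', ∃ n : ℤ, β x y = (n : ℚ)) ∧
        (∀ x ∈ L', ∃ n : ℤ, β x x = 2 * (n : ℚ))) →
      Nonempty (latticeQuot L L' ≃+ (ZMod 2 × ZMod 2)) :=
  unique_even_overlattice_general β hsymm L heven hLdual hcard u v hu hv hgen hordu hordv hqu hqv
    hbuv
end

section
/- Let F be a homogeneous cubic polynomial on V = ℂ⁶ defining a smooth cubic fourfold (the partial derivatives of F have no common zero in V ∖ {0}). Let W ⊆ V be a 3-dimensional subspace with F|_W = 0 and let Λ ⊆ W be a 2-dimensional subspace. Then there is AT MOST ONE 4-dimensional subspace U ⊆ V with W ⊆ U for which there exist a nonzero linear form l on U with ker l = W and a quadratic form q on U such that F|_U = l · q and q|_Λ = 0. -/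
open MvPolynomial

private lemma aeval_eq_eval' (g : Fin 6 → ℂ) (F : MvPolynomial (Fin 6) ℂ) :
    aeval g F = eval g F := by
  rw [← MvPolynomial.coe_aeval_eq_eval]; rfl

private lemma evalLine (F : MvPolynomial (Fin 6) ℂ) (x v : Fin 6 → ℂ) (t : ℂ) :
    Polynomial.eval t
      (aeval (fun i => Polynomial.C (x i) + Polynomial.X * Polynomial.C (v i)) F)
      = eval (x + t • v) F := by
  rw [← Polynomial.coe_aeval_eq_eval, MvPolynomial.comp_aeval_apply, ← aeval_eq_eval']
  have : (fun i => (Polynomial.aeval t) (Polynomial.C (x i) + Polynomial.X * Polynomial.C (v i)))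
      = (x + t • v) := by
    funext i
    simp only [map_add, map_mul, Polynomial.aeval_C, Polynomial.aeval_X,
      Algebra.algebraMap_self, RingHom.id_apply, Pi.add_apply, Pi.smul_apply, smul_eq_mul]
  rw [this]

private lemma coeffZeroLine (F : MvPolynomial (Fin 6) ℂ) (x v : Fin 6 → ℂ) :
    (aeval (fun i => Polynomial.C (x i) + Polynomial.X * Polynomial.C (v i)) F).coeff 0
      = eval x F := by
  have h := evalLine F x v 0
  rw [← Polynomial.coeff_zero_eq_eval_zero] at h
  simpa using h

private lemma coeffOneLine (F : MvPolynomial (Fin 6) ℂ) (x v : Fin 6 → ℂ) :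
    (aeval (fun i => Polynomial.C (x i) + Polynomial.X * Polynomial.C (v i)) F).coeff 1
      = ∑ i, v i * eval x (pderiv i F) := by
  induction F using MvPolynomial.induction_on with
  | C a => simp [pderiv_C]
  | add p q hp hq =>
      simp only [map_add, Polynomial.coeff_add, hp, hq, ← Finset.sum_add_distrib]
      exact Finset.sum_congr rfl fun i _ => by ring
  | mul_X p n ih =>
      have hX : ∀ i : Fin 6, eval x (pderiv i (X n : MvPolynomial (Fin 6) ℂ))
          = if i = n then 1 else 0 := by
        intro i
        rcases eq_or_ne i n with rfl | h
        · simp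
        · simp [pderiv_X_of_ne h.symm, h]
      have hR : ∑ i, v i * eval x (pderiv i (p * X n))
          = (∑ i, v i * eval x (pderiv i p)) * x n + v n * eval x p := by
        simp only [pderiv_mul, map_add, map_mul, eval_X, hX, mul_ite, mul_one, mul_zero,
          mul_add]
        rw [Finset.sum_add_distrib, Finset.sum_mul]
        congr 1
        · exact Finset.sum_congr rfl fun i _ => by ring
        · rw [Finset.sum_ite_eq' Finset.univ n (fun i => v i * eval x p)]
          simp [mul_comm]
      rw [hR, ← ih, ← coeffZeroLine p x v]
      rw [map_mul, aeval_X, mul_add, Polynomial.coeff_add, Polynomial.coeff_mul_C,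
        ← mul_assoc, Polynomial.coeff_mul_C]
      have : (aeval (fun i => Polynomial.C (x i) + Polynomial.X * Polynomial.C (v i)) p
          * Polynomial.X).coeff 1
          = (aeval (fun i => Polynomial.C (x i) + Polynomial.X * Polynomial.C (v i)) p).coeff 0 :=
        Polynomial.coeff_mul_X _ 0
      rw [this]
      ring

private lemma keyVanish (F : MvPolynomial (Fin 6) ℂ) (x v : Fin 6 → ℂ)
    (l : (Fin 6 → ℂ) →ₗ[ℂ] ℂ) (q : QuadraticForm ℂ (Fin 6 → ℂ))
    (hlx : l x = 0) (hqx : q x = 0)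
    (hfac : ∀ t : ℂ, eval (x + t • v) F = l (x + t • v) * q (x + t • v)) :
    ∑ i, v i * eval x (pderiv i F) = 0 := by
  set P := aeval (fun i => Polynomial.C (x i) + Polynomial.X * Polynomial.C (v i)) F with hP
  have hPeq : P = Polynomial.X ^ 2 *
      (Polynomial.C (l v * QuadraticMap.polar q x v)
        + Polynomial.X * Polynomial.C (l v * q v)) := by
    apply Polynomial.funext
    intro t
    rw [hP, evalLine F x v t, hfac t]
    have hq : q (x + t • v) = t * QuadraticMap.polar q x v + t ^ 2 * q v := by
      have hpol : QuadraticMap.polar q x (t • v) = q (x + t • v) - q x - q (t • v) := rfl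
      have h2 : q (t • v) = (t * t) * q v := by
        simpa [smul_eq_mul] using QuadraticMap.map_smul q t v
      have h3 : QuadraticMap.polar q x (t • v) = t * QuadraticMap.polar q x v := by
        simpa [smul_eq_mul] using QuadraticMap.polar_smul_right q t x v
      rw [h3, hqx, h2] at hpol
      ring_nf
      ring_nf at hpol
      linear_combination -hpol
    rw [map_add, map_smul, hlx, hq]
    simp only [Polynomial.eval_mul, Polynomial.eval_add, Polynomial.eval_pow,
      Polynomial.eval_X, Polynomial.eval_C, smul_eq_mul]
    ring
  have h1 : P.coeff 1 = 0 := by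
    rw [hPeq, mul_comm, Polynomial.coeff_mul_X_pow']
    norm_num
  rw [← coeffOneLine F x v, ← hP, h1]

private lemma degreeEqSumUniv (d : Fin 6 →₀ ℕ) : d.degree = ∑ i, d i :=
  Finset.sum_subset (Finset.subset_univ _) (fun i _ h => Finsupp.notMem_support_iff.mp h)

private lemma evalSmulPow {n : ℕ} {G : MvPolynomial (Fin 6) ℂ} (hG : G.IsHomogeneous n)
    (c : ℂ) (x : Fin 6 → ℂ) : eval (c • x) G = c ^ n * eval x G := by
  rw [eval_eq', eval_eq', Finset.mul_sum]
  refine Finset.sum_congr rfl fun d hd => ?_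
  have hdeg : ∑ i, d i = n := by
    rw [← degreeEqSumUniv, Finsupp.degree_eq_weight_one]
    exact hG (mem_support_iff.mp hd)
  have hprod : ∏ i, (c • x) i ^ d i = c ^ (∑ i, d i) * ∏ i, x i ^ d i := by
    rw [← Finset.prod_pow_eq_pow_sum, ← Finset.prod_mul_distrib]
    exact Finset.prod_congr rfl fun i _ => by simp [mul_pow]
  rw [hprod, hdeg]
  ring

private lemma isHomogeneousSum {α : Type*} (s : Finset α) (f : α → MvPolynomial (Fin 6) ℂ)
    (n : ℕ) (h : ∀ a ∈ s, (f a).IsHomogeneous n) : (∑ a ∈ s, f a).IsHomogeneous n := by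
  have : (∑ a ∈ s, f a) ∈ homogeneousSubmodule (Fin 6) ℂ n :=
    Submodule.sum_mem _ fun a ha => (mem_homogeneousSubmodule _ _).2 (h a ha)
  exact (mem_homogeneousSubmodule _ _).1 this

private lemma isHomogeneousPderiv {G : MvPolynomial (Fin 6) ℂ} {n : ℕ}
    (hG : G.IsHomogeneous (n + 1)) (i : Fin 6) : (pderiv i G).IsHomogeneous n := by
  rw [G.as_sum, map_sum]
  apply isHomogeneousSum
  intro d hd
  rw [pderiv_monomial]
  rcases Nat.eq_zero_or_pos (d i) with h0 | hpos
  · rw [h0]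
    simp only [Nat.cast_zero, mul_zero, monomial_zero]
    exact isHomogeneous_zero _ _ _
  · apply isHomogeneous_monomial
    have hdeg : ∑ j, d j = n + 1 := by
      rw [← degreeEqSumUniv, Finsupp.degree_eq_weight_one]
      exact hG (mem_support_iff.mp hd)
    have happ : ∀ j, ((d - Finsupp.single i 1) : Fin 6 →₀ ℕ) j = d j - (Finsupp.single i 1) j :=
      fun j => Finsupp.tsub_apply d (Finsupp.single i 1) j
    rw [degreeEqSumUniv]
    have e1 : ∑ j, d j = d i + ∑ j ∈ Finset.univ.erase i, d j :=
      (Finset.add_sum_erase _ _ (Finset.mem_univ i)).symm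
    have e2 : ∑ j, ((d - Finsupp.single i 1) : Fin 6 →₀ ℕ) j
        = (d i - 1) + ∑ j ∈ Finset.univ.erase i, d j := by
      rw [← Finset.add_sum_erase _ _ (Finset.mem_univ i), happ, Finsupp.single_eq_same]
      congr 1
      refine Finset.sum_congr rfl fun j hj => ?_
      rw [happ, Finsupp.single_eq_of_ne' (Finset.ne_of_mem_erase hj).symm]
      simp
    omega

/-- On a smooth cubic fourfold, a line `L = ℙ(Λ)` contained in a plane `P = ℙ(W) ⊂ X`
lies on the residual quadric surface of at most one linear 3-space `Π = ℙ(U)` containing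
the plane. -/
theorem at_most_one_residual_quadric_through_line
    (F : MvPolynomial (Fin 6) ℂ) (hF3 : F.IsHomogeneous 3)
    (hsmooth : ∀ x : Fin 6 → ℂ, x ≠ 0 → ∃ i, eval x (pderiv i F) ≠ 0)
    (W : Submodule ℂ (Fin 6 → ℂ)) (hW : Module.finrank ℂ W = 3)
    (hFW : ∀ x ∈ W, eval x F = 0)
    (Λ : Submodule ℂ (Fin 6 → ℂ)) (hΛW : Λ ≤ W) (hΛ : Module.finrank ℂ Λ = 2) :
    ∀ U₁ U₂ : Submodule ℂ (Fin 6 → ℂ),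
      (W ≤ U₁ ∧ Module.finrank ℂ U₁ = 4 ∧
        ∃ (l : (Fin 6 → ℂ) →ₗ[ℂ] ℂ) (q : QuadraticForm ℂ (Fin 6 → ℂ)),
          (∀ x ∈ U₁, (l x = 0 ↔ x ∈ W)) ∧
          (∀ x ∈ U₁, eval x F = l x * q x) ∧
          (∀ x ∈ Λ, q x = 0)) →
      (W ≤ U₂ ∧ Module.finrank ℂ U₂ = 4 ∧
        ∃ (l : (Fin 6 → ℂ) →ₗ[ℂ] ℂ) (q : QuadraticForm ℂ (Fin 6 → ℂ)),
          (∀ x ∈ U₂, (l x = 0 ↔ x ∈ W)) ∧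
          (∀ x ∈ U₂, eval x F = l x * q x) ∧
          (∀ x ∈ Λ, q x = 0)) →
      U₁ = U₂ := by
  intro U₁ U₂ h₁ h₂
  obtain ⟨hWU₁, hU₁4, l₁, q₁, hl₁, hFl₁, hq₁Λ⟩ := h₁
  obtain ⟨hWU₂, hU₂4, l₂, q₂, hl₂, hFl₂, hq₂Λ⟩ := h₂
  by_contra hne
  -- the sup S has dimension at least 5
  set S := U₁ ⊔ U₂ with hSdef
  have hU21 : ¬ U₂ ≤ U₁ := fun h =>
    hne (Submodule.eq_of_le_of_finrank_eq h (by rw [hU₁4, hU₂4])).symm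
  have hS5 : 5 ≤ Module.finrank ℂ S := by
    have hlt : U₁ < S := lt_of_le_of_ne le_sup_left
      (fun h => hU21 (h ▸ (le_sup_right : U₂ ≤ S)))
    have := Submodule.finrank_lt_finrank_of_lt hlt
    omega
  -- choose w completing S to the whole space
  obtain ⟨w, hw_top⟩ : ∃ w : Fin 6 → ℂ, S ⊔ Submodule.span ℂ {w} = ⊤ := by
    by_cases hS : S = ⊤
    · exact ⟨0, by simp [hS]⟩
    · obtain ⟨w, hw⟩ : ∃ w, w ∉ S := by
        by_contra h
        push_neg at h
        exact hS (Submodule.eq_top_iff'.mpr h)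
      refine ⟨w, ?_⟩
      have hlt : S < S ⊔ Submodule.span ℂ {w} := by
        refine lt_of_le_of_ne le_sup_left fun h => hw ?_
        rw [h]
        exact Submodule.mem_sup_right (Submodule.mem_span_singleton_self w)
      have h6 : Module.finrank ℂ ↥(S ⊔ Submodule.span ℂ {w}) ≤ 6 := by
        have := Submodule.finrank_le (S ⊔ Submodule.span ℂ {w})
        simpa [Module.finrank_fin_fun] using this
      apply Submodule.eq_top_of_finrank_eq
      have := Submodule.finrank_lt_finrank_of_lt hlt
      rw [Module.finrank_fin_fun]
      omega
  -- a basis of the line Λ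
  have : Module.Finite ℂ ↥Λ := inferInstance
  let b : Module.Basis (Fin 2) ℂ ↥Λ := Module.finBasisOfFinrankEq ℂ ↥Λ hΛ
  set u : Fin 6 → ℂ := (b 0 : Fin 6 → ℂ) with hu
  set vv : Fin 6 → ℂ := (b 1 : Fin 6 → ℂ) with hvv
  have huΛ : u ∈ Λ := (b 0).2
  have hvvΛ : vv ∈ Λ := (b 1).2
  have hcombo : ∀ α β : ℂ, α • u + β • vv = 0 → α = 0 ∧ β = 0 := by
    intro α β h
    have h' : α • b 0 + β • b 1 = 0 := by
      apply Subtype.ext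
      push_cast
      exact h
    have := Fintype.linearIndependent_iff.mp b.linearIndependent ![α, β]
      (by rwa [Fin.sum_univ_two]) 
    exact ⟨this 0, this 1⟩
  have hvvne : ∀ s : ℂ, vv + s • u ≠ 0 := by
    intro s h
    have := (hcombo s 1 (by rw [one_smul]; linear_combination (norm := module) h)).2
    norm_num at this
  have hune : ∀ s : ℂ, u + s • vv ≠ 0 := by
    intro s h
    have := (hcombo 1 s (by rw [one_smul]; linear_combination (norm := module) h)).1
    norm_num at this
  -- the quadratic polynomial G = ∂_w F
  set Gp : MvPolynomial (Fin 6) ℂ := ∑ i, MvPolynomial.C (w i) * pderiv i F with hGp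
  have hGhom : Gp.IsHomogeneous 2 := by
    apply isHomogeneousSum
    intro i _
    have h2 : (pderiv i F).IsHomogeneous 2 := isHomogeneousPderiv hF3 i
    simpa using (isHomogeneous_C (Fin 6) (w i)).mul h2
  have hGeval : ∀ y : Fin 6 → ℂ, eval y Gp = ∑ i, w i * eval y (pderiv i F) := by
    intro y
    rw [hGp, map_sum]
    exact Finset.sum_congr rfl fun i _ => by rw [map_mul, eval_C]
  -- find a nonzero point x₀ of Λ with (∂_w F)(x₀) = 0
  obtain ⟨x₀, hx₀Λ, hx₀ne, hx₀G⟩ :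
      ∃ x₀, x₀ ∈ Λ ∧ x₀ ≠ 0 ∧ eval x₀ Gp = 0 := by
    set p₁ := aeval (fun i => Polynomial.C (vv i) + Polynomial.X * Polynomial.C (u i)) Gp with hp₁
    by_cases hd1 : p₁.degree = 0
    case neg =>
      obtain ⟨s, hs⟩ := Complex.isAlgClosed.exists_root p₁ hd1
      refine ⟨vv + s • u, Λ.add_mem hvvΛ (Λ.smul_mem s huΛ), hvvne s, ?_⟩
      have := evalLine Gp vv u s
      rw [← hp₁] at this
      rw [← this]
      exact hs
    case pos =>
      have hp₁C : p₁ = Polynomial.C (p₁.coeff 0) :=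
        Polynomial.eq_C_of_degree_le_zero (le_of_eq hd1)
      set c := p₁.coeff 0 with hc
      have hcne : c ≠ 0 := by
        intro h
        rw [h, map_zero] at hp₁C
        rw [hp₁C] at hd1
        simp at hd1
      have hceval : ∀ s : ℂ, eval (vv + s • u) Gp = c := by
        intro s
        rw [← evalLine Gp vv u s, ← hp₁]
        conv_lhs => rw [hp₁C]
        simp
      set p₂ := aeval (fun i => Polynomial.C (u i) + Polynomial.X * Polynomial.C (vv i)) Gp with hp₂
      by_cases hd2 : p₂.degree = 0
      case neg =>
        obtain ⟨s, hs⟩ := Complex.isAlgClosed.exists_root p₂ hd2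
        refine ⟨u + s • vv, Λ.add_mem huΛ (Λ.smul_mem s hvvΛ), hune s, ?_⟩
        have := evalLine Gp u vv s
        rw [← hp₂] at this
        rw [← this]
        exact hs
      case pos =>
        exfalso
        have hp₂C : p₂ = Polynomial.C (p₂.coeff 0) :=
          Polynomial.eq_C_of_degree_le_zero (le_of_eq hd2)
        set c₂ := p₂.coeff 0 with hc₂
        have hc₂eval : ∀ s : ℂ, eval (u + s • vv) Gp = c₂ := by
          intro s
          rw [← evalLine Gp u vv s, ← hp₂]
          conv_lhs => rw [hp₂C]
          simp
        have key : ∀ t : ℂ, t ≠ 0 → c₂ = t ^ 2 * c := by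
          intro t ht
          have h1 : u + t • vv = t • (vv + t⁻¹ • u) := by
            rw [smul_add, smul_smul, mul_inv_cancel₀ ht, one_smul]
            abel
          calc c₂ = eval (u + t • vv) Gp := (hc₂eval t).symm
            _ = eval (t • (vv + t⁻¹ • u)) Gp := by rw [h1]
            _ = t ^ 2 * eval (vv + t⁻¹ • u) Gp := evalSmulPow hGhom t _
            _ = t ^ 2 * c := by rw [hceval]
        have k1 := key 1 one_ne_zero
        have k2 := key 2 two_ne_zero
        apply hcne
        have : (1 : ℂ) ^ 2 * c = 2 ^ 2 * c := by rw [← k1, ← k2]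
        linear_combination (this) / (-3)
  -- the gradient of F vanishes at x₀
  have hx₀W : x₀ ∈ W := hΛW hx₀Λ
  have hvan : ∀ (U : Submodule ℂ (Fin 6 → ℂ)) (l : (Fin 6 → ℂ) →ₗ[ℂ] ℂ)
      (q : QuadraticForm ℂ (Fin 6 → ℂ)), W ≤ U →
      (∀ x ∈ U, (l x = 0 ↔ x ∈ W)) → (∀ x ∈ U, eval x F = l x * q x) → (∀ x ∈ Λ, q x = 0) →
      ∀ v ∈ U, ∑ i, v i * eval x₀ (pderiv i F) = 0 := by
    intro U l q hWU hl hFl hqΛ v hv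
    have hx₀U : x₀ ∈ U := hWU hx₀W
    exact keyVanish F x₀ v l q ((hl x₀ hx₀U).mpr hx₀W) (hqΛ x₀ hx₀Λ)
      (fun t => hFl _ (U.add_mem hx₀U (U.smul_mem t hv)))
  have hvan₁ := hvan U₁ l₁ q₁ hWU₁ hl₁ hFl₁ hq₁Λ
  have hvan₂ := hvan U₂ l₂ q₂ hWU₂ hl₂ hFl₂ hq₂Λ
  have hgrad : ∀ y : Fin 6 → ℂ, ∑ i, y i * eval x₀ (pderiv i F) = 0 := by
    intro y
    have hy : y ∈ S ⊔ Submodule.span ℂ {w} := by rw [hw_top]; trivial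
    obtain ⟨a, ha, z, hz, rfl⟩ := Submodule.mem_sup.mp hy
    obtain ⟨c, rfl⟩ := Submodule.mem_span_singleton.mp hz
    obtain ⟨a₁, ha₁, a₂, ha₂, rfl⟩ := Submodule.mem_sup.mp ha
    have hsplit : ∑ i, (a₁ + a₂ + c • w) i * eval x₀ (pderiv i F)
        = (∑ i, a₁ i * eval x₀ (pderiv i F)) + (∑ i, a₂ i * eval x₀ (pderiv i F))
          + c * ∑ i, w i * eval x₀ (pderiv i F) := by
      rw [Finset.mul_sum, ← Finset.sum_add_distrib, ← Finset.sum_add_distrib]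
      refine Finset.sum_congr rfl fun i _ => by simp [Pi.add_apply, Pi.smul_apply]; ring
    rw [hsplit, hvan₁ a₁ ha₁, hvan₂ a₂ ha₂, ← hGeval x₀, hx₀G]
    ring
  obtain ⟨i, hi⟩ := hsmooth x₀ hx₀ne
  apply hi
  have := hgrad (Pi.single i 1)
  rwa [Finset.sum_eq_single i (fun j _ hj => by simp [Pi.single_eq_of_ne hj])
    (fun h => absurd (Finset.mem_univ i) h), Pi.single_eq_same, one_mul] at this
end

section
/- Let F be a homogeneous cubic polynomial on V = ℂ⁶, let U ⊆ V be a 4-dimensional subspace, let l be a linear form on U and q a quadratic form on U such that F|_U = l · q. Then for every x ∈ U with l(x) = 0 and q(x) = 0, the differential of F at x vanishes on all of U, i.e., U ⊆ ker(dF_x). In particular, if a cubic fourfold X = {F = 0} meets a projective 3-space Π = ℙ(U) in the union of a plane P = ℙ(ker l) and a quadric Q = ℙ({q = 0}), then for every point x of a line L ⊆ P ∩ Q one has Π ⊆ T_x X. -/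
/-!
Restrict `F` to the line `t ↦ x + t • y` with `y ∈ U`. On `U` we have `F = l * q`, and since
`l x = q x = 0`, the restriction is `t * l y * (t * polar q x y + t ^ 2 * q y)`, which vanishes
to order two at `t = 0`. But its coefficient of `t` is `dF_x(y)`.
-/

open MvPolynomial

/-- The differential `dF_x : V → ℂ` of a polynomial `F` at a point `x`,
given by `y ↦ ∑ i, y i * ∂F/∂xᵢ(x)`. -/
noncomputable def diffAt (F : MvPolynomial (Fin 6) ℂ) (x : Fin 6 → ℂ) :
    (Fin 6 → ℂ) →ₗ[ℂ] ℂ :=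
  ∑ i, (eval x (pderiv i F)) • LinearMap.proj i

namespace MvPolynomial

variable {σ R : Type*} [CommRing R]

noncomputable def restrictToLine (x y : σ → R) : MvPolynomial σ R →ₐ[R] Polynomial R :=
  aeval fun i => Polynomial.C (x i) + Polynomial.C (y i) * Polynomial.X

theorem eval_restrictToLine (x y : σ → R) (p : MvPolynomial σ R) (t : R) :
    (restrictToLine x y p).eval t = eval (x + t • y) p := by
  have hid : (Polynomial.evalRingHom t).comp (algebraMap R (Polynomial R)) = RingHom.id R :=
    RingHom.ext fun _ => by simp
  rw [restrictToLine, aeval_def, polynomial_eval_eval₂, hid, eval₂_id]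
  congr
  funext i
  simp only [Polynomial.eval_add, Polynomial.eval_mul, Polynomial.eval_C, Polynomial.eval_X,
    Pi.add_apply, Pi.smul_apply, smul_eq_mul, mul_comm]

theorem coeff_zero_restrictToLine (x y : σ → R) (p : MvPolynomial σ R) :
    (restrictToLine x y p).coeff 0 = eval x p := by
  simp [Polynomial.coeff_zero_eq_eval_zero, eval_restrictToLine]

theorem coeff_one_restrictToLine [Fintype σ] (x y : σ → R) (p : MvPolynomial σ R) :
    (restrictToLine x y p).coeff 1 = ∑ i, y i * eval x (pderiv i p) := by
  classical
  induction p using MvPolynomial.induction_on with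
  | C a => simp [restrictToLine]
  | add p p' hp hp' => simp [hp, hp', Finset.sum_add_distrib, mul_add]
  | mul_X p j hp =>
    have hline : restrictToLine x y (p * X j)
        = restrictToLine x y p * Polynomial.C (x j)
          + restrictToLine x y p * Polynomial.X * Polynomial.C (y j) := by
      rw [map_mul, restrictToLine, aeval_X]
      ring
    simp only [hline, Polynomial.coeff_add, Polynomial.coeff_mul_C, hp, Finset.sum_mul,
      Polynomial.coeff_mul_X, coeff_zero_restrictToLine, Derivation.leibniz, pderiv_X,
      Pi.single_apply, apply_ite, smul_eq_mul, mul_one, mul_zero, map_add, map_zero, map_mul,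
      eval_X, mul_add, Finset.sum_add_distrib, Finset.sum_ite_eq, Finset.mem_univ, ↓reduceIte]
    rw [add_comm, mul_comm (eval x p)]
    congr 1
    exact Finset.sum_congr rfl fun i _ => by ring

end MvPolynomial

theorem diffAt_apply_eq_coeff_one (F : MvPolynomial (Fin 6) ℂ) (x y : Fin 6 → ℂ) :
    diffAt F x y = (restrictToLine x y F).coeff 1 := by
  simp [diffAt, coeff_one_restrictToLine, mul_comm]

theorem X_sq_dvd_restrictToLine_of_eq_mul {σ K : Type*} [Field K] [Infinite K]
    {F : MvPolynomial σ K} {U : Submodule K (σ → K)} {l : (σ → K) →ₗ[K] K}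
    {q : QuadraticForm K (σ → K)} (hfact : ∀ y ∈ U, eval y F = l y * q y)
    {x y : σ → K} (hx : x ∈ U) (hlx : l x = 0) (hqx : q x = 0) (hy : y ∈ U) :
    Polynomial.X ^ 2 ∣ restrictToLine x y F := by
  refine ⟨Polynomial.C (l y) * (Polynomial.C (QuadraticMap.polar q x y)
    + Polynomial.C (q y) * Polynomial.X), Polynomial.funext fun t => ?_⟩
  have hl : l (x + t • y) = t * l y := by simp [hlx]
  have hq : q (x + t • y) = t * QuadraticMap.polar q x y + t ^ 2 * q y := by
    rw [QuadraticMap.map_add q, QuadraticMap.polar_smul_right, QuadraticMap.map_smul, hqx]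
    simp only [smul_eq_mul]
    ring
  rw [eval_restrictToLine, hfact _ (U.add_mem hx (U.smul_mem t hy)), hl, hq]
  simp only [Polynomial.eval_mul, Polynomial.eval_add, Polynomial.eval_pow, Polynomial.eval_C,
    Polynomial.eval_X]
  ring

theorem tangent_contains_span_general
    (F : MvPolynomial (Fin 6) ℂ)
    (U : Submodule ℂ (Fin 6 → ℂ))
    (l : (Fin 6 → ℂ) →ₗ[ℂ] ℂ) (q : QuadraticForm ℂ (Fin 6 → ℂ))
    (hfact : ∀ y ∈ U, eval y F = l y * q y) :
    ∀ x ∈ U, l x = 0 → q x = 0 → ∀ y ∈ U, diffAt F x y = 0 := by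
  intro x hx hlx hqx y hy
  rw [diffAt_apply_eq_coeff_one]
  exact Polynomial.X_pow_dvd_iff.mp
    (X_sq_dvd_restrictToLine_of_eq_mul hfact hx hlx hqx hy) 1 one_lt_two

/-- If a cubic `F` restricted to a 4-dimensional subspace `U` factors as `l · q`, then at
every point of `U` where both `l` and `q` vanish, the differential of `F` vanishes on all
of `U`: the tangent hyperplane at any point of a line `L ⊆ P ∩ Q` contains `Π = ℙ(U)`. -/
theorem tangent_contains_span
    (F : MvPolynomial (Fin 6) ℂ) (hF3 : F.IsHomogeneous 3)
    (U : Submodule ℂ (Fin 6 → ℂ)) (hU : Module.finrank ℂ U = 4)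
    (l : (Fin 6 → ℂ) →ₗ[ℂ] ℂ) (q : QuadraticForm ℂ (Fin 6 → ℂ))
    (hfact : ∀ y ∈ U, eval y F = l y * q y) :
    ∀ x ∈ U, l x = 0 → q x = 0 → ∀ y ∈ U, diffAt F x y = 0 :=
  tangent_contains_span_general F U l q hfact
end
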